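/- As an L₀-structure, the minimal model C of T is isomorphic to the disjoint union over i of countably many copies of each finite model Mᵢ of T₀; moreover, every model M of T decomposes as the L₀-disjoint union of its copy of C and the substructure on the non-constant elements. -/

import Mathlib

open FirstOrder Language

def L0 : FirstOrder.Language where
  Functions := fun _ => Empty
  Relations := fun n => match n with
    | 1 => ℕ
    | 2 => ℕ
    | _ => Empty

def pRel (i : ℕ) : L0.Relations 1 := i

def ltRel (i : ℕ) : L0.Relations 2 := i

def L0Str {M : Type*} (P : ℕ → M → Prop) (lt : ℕ → M → M → Prop) : L0.Structure M where
  funMap := fun {n} f _ => Empty.elim f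
  RelMap := fun {n} => match n with
    | 0 => fun r _ => Empty.elim r
    | 1 => fun i v => P i (v 0)
    | 2 => fun i v => lt i (v 0) (v 1)
    | (_ + 3) => fun r _ => Empty.elim r

/-- `x` satisfies the predicate `Pᵢ`. -/
def pOn {M : Type*} [L0.Structure M] (i : ℕ) (x : M) : Prop :=
  Structure.RelMap (pRel i) ![x]

/-- `x <ᵢ y`. -/
def ltOn {M : Type*} [L0.Structure M] (i : ℕ) (x y : M) : Prop :=
  Structure.RelMap (ltRel i) ![x, y]

/-- The formula `Pᵢ t`. -/
def pFml {n : ℕ} (i : ℕ) (t : L0.Term (Empty ⊕ Fin n)) : L0.BoundedFormula Empty n :=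
  (pRel i).boundedFormula₁ t

/-- The formula `t₁ <ᵢ t₂`. -/
def ltFml {n : ℕ} (i : ℕ) (t₁ t₂ : L0.Term (Empty ⊕ Fin n)) : L0.BoundedFormula Empty n :=
  (ltRel i).boundedFormula₂ t₁ t₂

/-- `Pᵢ` and `Pⱼ` are disjoint. -/
def axDisj (i j : ℕ) : L0.Sentence := ∀' ((pFml i &0 ⊓ pFml j &0).not)

/-- `<ᵢ ⊆ Pᵢ × Pᵢ₊₁`. -/
def axDom (i : ℕ) : L0.Sentence := ∀' ∀' ((ltFml i &0 &1).imp (pFml i &0 ⊓ pFml (i + 1) &1))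

/-- Existence of predecessors. -/
def axEx (i : ℕ) : L0.Sentence := ∀' ((pFml (i + 1) &0).imp (∃' (pFml i &1 ⊓ ltFml i &1 &0)))

/-- Uniqueness of predecessors. -/
def axUniq (i : ℕ) : L0.Sentence :=
  ∀' ∀' ∀' (((ltFml i &0 &2) ⊓ (ltFml i &1 &2)).imp (Term.bdEqual &0 &1))

/-- The base theory `T₀` of leveled forests. -/
def T0 : L0.Theory :=
  {φ | (∃ i j, i ≠ j ∧ φ = axDisj i j) ∨ (∃ i, φ = axDom i) ∨
    (∃ i, φ = axEx i) ∨ (∃ i, φ = axUniq i)}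

/-- A bundled finite model of `T₀`. -/
structure FinT0Model where
  carrier : Type
  [str : L0.Structure carrier]
  fin : Finite carrier
  models : carrier ⊨ T0

attribute [instance] FinT0Model.str

variable (Ms : ℕ → FinT0Model)

/-- The constants of the theory `T`: for each `i, j ∈ ω`, the block `Cᵢʲ` consists of one constant
for each element of the finite model `Mᵢ`. -/
def ConstT : Type := (i : ℕ) × ℕ × (Ms i).carrier

/-- A model of the theory `T`: an `L₀`-structure together with an interpretation of the constants
`Cᵢʲ`, such that `T₀` holds, the constants are pairwise distinct, each block `Cᵢʲ` is an
`L₀`-substructure isomorphic to `Mᵢ` (via the tautological indexing), and each block is closed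
under every relation `<ₖ` in both directions. -/
structure TModel where
  carrier : Type
  [str : L0.Structure carrier]
  interp : ConstT Ms → carrier
  models0 : carrier ⊨ T0
  interp_inj : Function.Injective interp
  interp_P : ∀ (c : ConstT Ms) (n : ℕ), pOn n (interp c) ↔ pOn n c.2.2
  interp_lt : ∀ (i j : ℕ) (a b : (Ms i).carrier) (n : ℕ),
    ltOn n (interp ⟨i, j, a⟩) (interp ⟨i, j, b⟩) ↔ ltOn n a b
  closed : ∀ (i j : ℕ) (a : (Ms i).carrier) (n : ℕ) (y : carrier),
    ltOn n (interp ⟨i, j, a⟩) y ∨ ltOn n y (interp ⟨i, j, a⟩) →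
      ∃ b : (Ms i).carrier, y = interp ⟨i, j, b⟩

attribute [instance] TModel.str

/-- The interpretation of the language `L₀ ∪ C` (i.e. `L₀` with the constants added) on a model
of `T`. -/
noncomputable def TModel.cStr (M : TModel Ms) : (L0[[ConstT Ms]]).Structure M.carrier :=
  @Language.sumStructure L0 (constantsOn (ConstT Ms)) M.carrier M.str
    (constantsOn.structure M.interp)

/-- The enumeration `Ms` lists all finite models of `T₀` up to isomorphism. -/
def ListsAllFinModels : Prop :=
  ∀ N : FinT0Model, ∃ i, Nonempty (N.carrier ≃[L0] (Ms i).carrier)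

/-- The disjoint union `⊔ᵢ Mᵢ^ω` of countably many copies of each finite model `Mᵢ`, as an
`L₀`-structure (relations interpreted componentwise, nothing across components). -/
def DUStr : L0.Structure (ConstT Ms) :=
  L0Str (fun n x => pOn n x.2.2)
    (fun n x y => ∃ e : x.1 = y.1, x.2.1 = y.2.1 ∧
      ltOn n (cast (congrArg (fun i => (Ms i).carrier) e) x.2.2) y.2.2)

/-- The induced `L₀`-structure on a subset (any subset is a substructure since `L₀` is
relational). -/
def subStr {M : Type*} [L0.Structure M] (s : Set M) : L0.Structure s :=
  L0Str (fun n x => pOn n x.val) (fun n x y => ltOn n x.val y.val)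

/-- The disjoint union of two `L₀`-structures. -/
def sumStr (A B : Type*) [L0.Structure A] [L0.Structure B] : L0.Structure (A ⊕ B) :=
  L0Str (fun n x => x.elim (pOn n) (pOn n))
    (fun n x y => match x, y with
      | .inl a, .inl b => ltOn n a b
      | .inr a, .inr b => ltOn n a b
      | _, _ => False)

/-- The `L₀`-structure on the disjoint union of the constants of `M` and the non-constant
elements of `M`. -/
def decompStr (M : TModel Ms) :
    L0.Structure ((Set.range M.interp : Set M.carrier) ⊕
      ((Set.range M.interp : Set M.carrier)ᶜ : Set M.carrier)) :=
  @sumStr _ _ (subStr _) (subStr _)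

/-! Since `L₀` is relational, a bijection is an `L₀`-isomorphism as soon as it preserves every
`Pᵢ` and `<ᵢ`. The constants of a model of `T` carry the disjoint-union structure because each
block `Cᵢʲ` is a copy of `Mᵢ` closed under every `<ₖ`, and injectivity of the constants keeps
distinct blocks apart; the same closure shows that no `<ₖ` joins a constant to a non-constant, so a
model splits as the disjoint union of its constants and the rest. -/

lemma relMap_one_iff {M : Type*} [L0.Structure M] (i : L0.Relations 1) (v : Fin 1 → M) :
    Structure.RelMap i v ↔ pOn i (v 0) :=
  Iff.of_eq (congrArg (Structure.RelMap i) (FinVec.etaExpand_eq v).symm)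

lemma relMap_two_iff {M : Type*} [L0.Structure M] (i : L0.Relations 2) (v : Fin 2 → M) :
    Structure.RelMap i v ↔ ltOn i (v 0) (v 1) :=
  Iff.of_eq (congrArg (Structure.RelMap i) (FinVec.etaExpand_eq v).symm)

def Equiv.toL0Equiv {A B : Type*} [L0.Structure A] [L0.Structure B] (e : A ≃ B)
    (hp : ∀ n x, pOn n (e x) ↔ pOn n x) (hlt : ∀ n x y, ltOn n (e x) (e y) ↔ ltOn n x y) :
    A ≃[L0] B where
  toEquiv := e
  map_fun' f := Empty.elim f
  map_rel' {n} r v := by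
    match n, r with
    | 0, r => exact Empty.elim r
    | 1, i => rw [relMap_one_iff, relMap_one_iff]; exact hp i (v 0)
    | 2, i => rw [relMap_two_iff, relMap_two_iff]; exact hlt i (v 0) (v 1)
    | _ + 3, r => exact Empty.elim r

namespace TModel

variable {Ms} (M : TModel Ms)

lemma eq_of_ltOn_interp {i j : ℕ} {a : (Ms i).carrier} {n : ℕ} {c : ConstT Ms}
    (h : ltOn n (M.interp ⟨i, j, a⟩) (M.interp c)) : ∃ b, c = ⟨i, j, b⟩ := by
  obtain ⟨b, hb⟩ := M.closed i j a n _ (Or.inl h)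
  exact ⟨b, M.interp_inj hb⟩

lemma ltOn_interp_iff (n : ℕ) (x y : ConstT Ms) :
    ltOn n (M.interp x) (M.interp y) ↔ @ltOn _ (DUStr Ms) n x y := by
  obtain ⟨i, j, a⟩ := x
  show _ ↔ ∃ e : i = y.1, j = y.2.1 ∧
    ltOn n (cast (congrArg (fun i => (Ms i).carrier) e) a) y.2.2
  constructor
  · intro h
    obtain ⟨b, rfl⟩ := M.eq_of_ltOn_interp h
    exact ⟨rfl, rfl, (M.interp_lt i j a b n).mp h⟩
  · rintro ⟨rfl, rfl, h⟩
    exact (M.interp_lt _ _ _ _ n).mpr h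

lemma not_ltOn_of_mem_range_of_notMem {x y : M.carrier} (hx : x ∈ Set.range M.interp)
    (hy : y ∉ Set.range M.interp) (n : ℕ) : ¬ ltOn n x y ∧ ¬ ltOn n y x := by
  obtain ⟨⟨i, j, a⟩, rfl⟩ := hx
  refine not_or.mp fun h => ?_
  obtain ⟨b, rfl⟩ := M.closed i j a n y h
  exact hy ⟨_, rfl⟩

noncomputable def constEquivOfSurjective (hM : Function.Surjective M.interp) :
    @Language.Equiv L0 (ConstT Ms) M.carrier (DUStr Ms) M.str :=
  @Equiv.toL0Equiv _ _ (DUStr Ms) _ (Equiv.ofBijective M.interp ⟨M.interp_inj, hM⟩)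
    (fun n x => M.interp_P x n) M.ltOn_interp_iff

end TModel

open scoped Classical in
noncomputable def equivSumCompl {M : Type*} [L0.Structure M] (s : Set M)
    (hs : ∀ x ∈ s, ∀ y ∉ s, ∀ n, ¬ ltOn n x y ∧ ¬ ltOn n y x) :
    @Language.Equiv L0 M (s ⊕ (sᶜ : Set M)) _ (@sumStr _ _ (subStr s) (subStr sᶜ)) :=
  letI := @sumStr _ _ (subStr s) (subStr sᶜ)
  Language.Equiv.symm <| Equiv.toL0Equiv (Equiv.Set.sumCompl s)
    (fun n x => by rcases x with a | a <;> rfl)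
    (fun n x y => by
      rcases x with ⟨a, ha⟩ | ⟨a, ha⟩ <;> rcases y with ⟨b, hb⟩ | ⟨b, hb⟩
      · rfl
      · exact iff_of_false (hs a ha b hb n).1 not_false
      · exact iff_of_false (hs b hb a ha n).2 not_false
      · rfl)

theorem constant_model_decomposition_general (Ms : ℕ → FinT0Model) :
    (∀ C : TModel Ms, Function.Surjective C.interp →
      Nonempty (@Language.Equiv L0 (ConstT Ms) C.carrier (DUStr Ms) C.str)) ∧
    (∀ M : TModel Ms,
      Nonempty (@Language.Equiv L0 M.carrier
        ((Set.range M.interp : Set M.carrier) ⊕ ((Set.range M.interp : Set M.carrier)ᶜ : Set M.carrier))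
        M.str
        (decompStr Ms M))) :=
  ⟨fun C hC => ⟨C.constEquivOfSurjective hC⟩,
    fun M => ⟨equivSumCompl _ fun _ hx _ hy => M.not_ltOn_of_mem_range_of_notMem hx hy⟩⟩

/-- as an `L₀`-structure, the minimal model `C` of `T` (the one all of whose
elements are constants) is isomorphic to the disjoint union of countably many copies of each
finite model `Mᵢ`; moreover every model `M` of `T` decomposes as the `L₀`-disjoint union of its
copy of `C` (the substructure on the constants) and the substructure on the non-constant
elements. -/
theorem constant_model_decomposition (Ms : ℕ → FinT0Model) (hMs : ListsAllFinModels Ms) :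
    (∀ C : TModel Ms, Function.Surjective C.interp →
      Nonempty (@Language.Equiv L0 (ConstT Ms) C.carrier (DUStr Ms) C.str)) ∧
    (∀ M : TModel Ms,
      Nonempty (@Language.Equiv L0 M.carrier
        ((Set.range M.interp : Set M.carrier) ⊕ ((Set.range M.interp : Set M.carrier)ᶜ : Set M.carrier))
        M.str
        (decompStr Ms M))) :=
  constant_model_decomposition_general Ms
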